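/- arXiv:2303.05682 — 3 statements merged into one kernel-verified Lean document; each statement's English description precedes it below -/
import Mathlib

section
/- For n ≥ 4, the set of eigenvalues of H (over ℝ) is exactly {2, n, 2n}. -/
open Matrix

/-- The index set 𝕀 = {(i,j) : 1 ≤ i < j ≤ n}, realized as ordered pairs of `Fin n`. -/
abbrev Idx (n : ℕ) := {p : Fin n × Fin n // p.1 < p.2}

/-- The basis matrix `w_{i,j} = e_{i,i} + e_{j,j} - e_{i,j} - e_{j,i}`. -/
noncomputable def w {n : ℕ} (α : Idx n) : Matrix (Fin n) (Fin n) ℝ :=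
  Matrix.single α.1.1 α.1.1 1 + Matrix.single α.1.2 α.1.2 1
    - Matrix.single α.1.1 α.1.2 1 - Matrix.single α.1.2 α.1.1 1

/-- The inner product matrix `H` with entries `H_{α,β} = ⟨w_α, w_β⟩ = trace(w_αᵀ w_β)`. -/
noncomputable def H (n : ℕ) : Matrix (Idx n) (Idx n) ℝ :=
  Matrix.of fun α β => ((w α)ᵀ * w β).trace

/-- Incidence weight: `c i β` is 1 if `i` is an endpoint of `β`, else 0. -/
def c {n : ℕ} (i : Fin n) (β : Idx n) : ℝ :=
  (if i = β.1.1 then 1 else 0) + (if i = β.1.2 then 1 else 0)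

lemma H_apply {n : ℕ} (α β : Idx n) :
    H n α β = c α.1.1 β + c α.1.2 β + (if α = β then 2 else 0) := by
  obtain ⟨⟨i, j⟩, hij⟩ := α
  obtain ⟨⟨k, l⟩, hkl⟩ := β
  simp only at hij hkl
  simp only [H, c, Matrix.of_apply, Matrix.trace, Matrix.diag, Matrix.mul_apply,
    Matrix.transpose_apply, w, Matrix.sub_apply, Matrix.add_apply, Matrix.single,
    Matrix.of_apply]
  simp only [Subtype.mk.injEq, Prod.mk.injEq]
  simp only [sub_mul, add_mul, mul_sub, mul_add, Finset.sum_sub_distrib, Finset.sum_add_distrib,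
    ite_mul, mul_ite, one_mul, mul_one, zero_mul, mul_zero, ite_and]
  simp only [Finset.sum_ite_eq, Finset.sum_ite_eq', Finset.mem_univ, if_true,
    Finset.sum_ite_irrel, Finset.sum_const_zero]
  rw [Fin.lt_def] at hij hkl
  simp only [Fin.ext_iff]
  split_ifs <;> first | omega | norm_num

lemma sum_idx {n : ℕ} (g : Fin n × Fin n → ℝ) :
    ∑ β : Idx n, g β.1 = ∑ a : Fin n, ∑ b : Fin n, if a < b then g (a, b) else 0 := by
  have h1 : ∑ β : Idx n, g β.1
      = ∑ p ∈ Finset.univ.filter (fun p : Fin n × Fin n => p.1 < p.2), g p :=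
    (Finset.sum_subtype _ (fun x => by simp) _).symm
  rw [h1, Finset.sum_filter, Fintype.sum_prod_type]

lemma sum_c {n : ℕ} (i : Fin n) : ∑ β : Idx n, c i β = (n : ℝ) - 1 := by
  have h : ∑ β : Idx n, c i β = ∑ a : Fin n, ∑ b : Fin n,
      if a < b then ((if i = a then (1:ℝ) else 0) + (if i = b then 1 else 0)) else 0 :=
    sum_idx (fun p => (if i = p.1 then (1:ℝ) else 0) + (if i = p.2 then 1 else 0))
  have key : ∀ a b : Fin n,
      (if a < b then ((if i = a then (1:ℝ) else 0) + (if i = b then 1 else 0)) else 0)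
      = (if i = a then (if a < b then (1:ℝ) else 0) else 0)
        + (if i = b then (if a < b then (1:ℝ) else 0) else 0) := by
    intro a b
    split_ifs <;> simp_all <;> omega
  simp only [key, Finset.sum_add_distrib, Finset.sum_ite_irrel, Finset.sum_ite_eq,
    Finset.mem_univ, if_true, Finset.sum_const_zero] at h
  rw [h]
  have h2 : ∑ b : Fin n, (if i < b then (1:ℝ) else 0) = (Finset.Ioi i).card := by
    rw [Finset.sum_boole, Finset.filter_lt_eq_Ioi]
  have h3 : ∑ a : Fin n, (if a < i then (1:ℝ) else 0) = (Finset.Iio i).card := by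
    rw [Finset.sum_boole, Finset.filter_gt_eq_Iio]
  rw [h2, h3, Fin.card_Ioi, Fin.card_Iio]
  have hi := i.isLt
  have : (i:ℕ) ≤ n - 1 := by omega
  push_cast [Nat.cast_sub this, Nat.cast_sub hi.le]
  push_cast [Nat.cast_sub (by omega : 1 ≤ n)]
  ring

lemma sum_cc {n : ℕ} (i k : Fin n) :
    ∑ β : Idx n, c i β * c k β = if i = k then (n : ℝ) - 1 else 1 := by
  by_cases hik : i = k
  · subst hik
    simp only [if_pos rfl]
    rw [← sum_c i]
    apply Finset.sum_congr rfl
    intro β _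
    have hβ := β.2
    unfold c
    rw [Fin.lt_def] at hβ
    split_ifs <;> simp_all [Fin.ext_iff] <;> omega
  · rw [if_neg hik]
    have h : ∑ β : Idx n, c i β * c k β = ∑ a : Fin n, ∑ b : Fin n,
        if a < b then (((if i = a then (1:ℝ) else 0) + (if i = b then 1 else 0))
          * ((if k = a then (1:ℝ) else 0) + (if k = b then 1 else 0))) else 0 :=
      sum_idx (fun p => ((if i = p.1 then (1:ℝ) else 0) + (if i = p.2 then 1 else 0))
        * ((if k = p.1 then (1:ℝ) else 0) + (if k = p.2 then 1 else 0)))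
    have key : ∀ a b : Fin n,
        (if a < b then (((if i = a then (1:ℝ) else 0) + (if i = b then 1 else 0))
          * ((if k = a then (1:ℝ) else 0) + (if k = b then 1 else 0))) else 0)
        = (if i = a then (if k = b then (if a < b then (1:ℝ) else 0) else 0) else 0)
          + (if k = a then (if i = b then (if a < b then (1:ℝ) else 0) else 0) else 0) := by
      intro a b
      split_ifs <;> simp_all <;> omega
    simp only [key, Finset.sum_add_distrib, Finset.sum_ite_irrel, Finset.sum_ite_eq,
      Finset.mem_univ, if_true, Finset.sum_const_zero] at h
    rw [h]
    rcases lt_or_gt_of_ne hik with hlt | hgt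
    · rw [if_pos hlt, if_neg (not_lt.mpr hlt.le)]; norm_num
    · rw [if_neg (not_lt.mpr hgt.le), if_pos hgt]; norm_num

lemma c_expand {n : ℕ} (r : Fin n → ℝ) (α : Idx n) :
    ∑ k : Fin n, c k α * r k = r α.1.1 + r α.1.2 := by
  unfold c
  simp only [add_mul, ite_mul, one_mul, zero_mul, Finset.sum_add_distrib,
    Finset.sum_ite_eq, Finset.sum_ite_eq', Finset.mem_univ, if_true]

lemma H_mulVec {n : ℕ} (v : Idx n → ℝ) (α : Idx n) :
    (H n).mulVec v α
      = 2 * v α + (∑ β, c α.1.1 β * v β) + (∑ β, c α.1.2 β * v β) := by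
  simp only [Matrix.mulVec, dotProduct, H_apply, add_mul, ite_mul, zero_mul,
    Finset.sum_add_distrib, Finset.sum_ite_eq, Finset.sum_ite_eq', Finset.mem_univ, if_true,
    Finset.sum_const_zero]
  ring

/-- key combinatorial identity: weighted incidence sums. -/
lemma sum_c_weighted {n : ℕ} (r : Fin n → ℝ) (i : Fin n) :
    ∑ β : Idx n, c i β * (r β.1.1 + r β.1.2)
      = ((n : ℝ) - 2) * r i + ∑ k : Fin n, r k := by
  have h : ∀ β : Idx n, c i β * (r β.1.1 + r β.1.2) = ∑ k : Fin n, c i β * (c k β * r k) := by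
    intro β
    rw [← Finset.mul_sum, c_expand]
  simp only [h]
  rw [Finset.sum_comm]
  have h2 : ∀ k : Fin n, ∑ β : Idx n, c i β * (c k β * r k)
      = (if i = k then (n : ℝ) - 1 else 1) * r k := by
    intro k
    rw [← sum_cc i k, Finset.sum_mul]
    apply Finset.sum_congr rfl
    intro β _
    ring
  simp only [h2]
  have h3 : ∀ k : Fin n, (if i = k then (n : ℝ) - 1 else 1) * r k
      = (if i = k then ((n:ℝ) - 2) * r k else 0) + r k := by
    intro k
    split_ifs <;> ring
  simp only [h3, Finset.sum_add_distrib, Finset.sum_ite_eq, Finset.mem_univ, if_true]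

lemma sum_idx_pair {n : ℕ} (r : Fin n → ℝ) :
    ∑ α : Idx n, (r α.1.1 + r α.1.2) = ((n : ℝ) - 1) * ∑ k : Fin n, r k := by
  have h : ∀ α : Idx n, r α.1.1 + r α.1.2 = ∑ k : Fin n, c k α * r k := by
    intro α; rw [c_expand]
  simp only [h]
  rw [Finset.sum_comm]
  have h2 : ∀ k : Fin n, ∑ α : Idx n, c k α * r k = ((n:ℝ) - 1) * r k := by
    intro k
    rw [← Finset.sum_mul, sum_c]
  simp only [h2, ← Finset.mul_sum]

lemma sum_c_fixed {n : ℕ} (β : Idx n) : ∑ k : Fin n, c k β = 2 := by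
  have h := c_expand (fun _ => (1:ℝ)) β
  simp only [mul_one] at h
  rw [h]; norm_num

lemma mem_spectrum_H_iff {n : ℕ} {μ : ℝ} :
    μ ∈ spectrum ℝ (H n) ↔ ∃ v : Idx n → ℝ, v ≠ 0 ∧ (H n).mulVec v = μ • v := by
  rw [spectrum.mem_iff]
  have hdet : ¬IsUnit (algebraMap ℝ (Matrix (Idx n) (Idx n) ℝ) μ - H n)
      ↔ (algebraMap ℝ (Matrix (Idx n) (Idx n) ℝ) μ - H n).det = 0 := by
    rw [Matrix.isUnit_iff_isUnit_det, isUnit_iff_ne_zero, not_ne_iff]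
  rw [hdet, ← Matrix.exists_mulVec_eq_zero_iff]
  constructor
  · rintro ⟨v, hv, heq⟩
    refine ⟨v, hv, ?_⟩
    have : (algebraMap ℝ (Matrix (Idx n) (Idx n) ℝ) μ - H n).mulVec v
        = μ • v - (H n).mulVec v := by
      rw [Matrix.sub_mulVec, Algebra.algebraMap_eq_smul_one, Matrix.smul_mulVec,
        Matrix.one_mulVec]
    rw [this] at heq
    exact (sub_eq_zero.mp heq).symm
  · rintro ⟨v, hv, heq⟩
    refine ⟨v, hv, ?_⟩
    rw [Matrix.sub_mulVec, Algebra.algebraMap_eq_smul_one, Matrix.smul_mulVec,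
      Matrix.one_mulVec, heq, sub_self]

set_option maxHeartbeats 2000000 in
/-- For `n ≥ 4` the set of (real) eigenvalues of `H` is exactly `{2, n, 2n}`. -/
theorem stmt3 {n : ℕ} (hn : 4 ≤ n) :
    spectrum ℝ (H n) = {(2 : ℝ), (n : ℝ), 2 * (n : ℝ)} := by
  have hn4 : (4:ℝ) ≤ (n:ℝ) := by exact_mod_cast hn
  ext μ
  simp only [Set.mem_insert_iff, Set.mem_singleton_iff]
  constructor
  · intro hμ
    obtain ⟨v, hv0, hv⟩ := mem_spectrum_H_iff.mp hμ
    set r : Fin n → ℝ := fun i => ∑ β : Idx n, c i β * v β with hrdef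
    set S : ℝ := ∑ β : Idx n, v β with hSdef
    have eig : ∀ α : Idx n, μ * v α = 2 * v α + r α.1.1 + r α.1.2 := by
      intro α
      have h := congrFun hv α
      rw [H_mulVec] at h
      simp only [Pi.smul_apply, smul_eq_mul] at h
      rw [← h, hrdef]
    have hsumr : ∑ k : Fin n, r k = 2 * S := by
      simp only [hrdef]
      rw [Finset.sum_comm]
      have : ∀ β : Idx n, ∑ k : Fin n, c k β * v β = 2 * v β := by
        intro β
        rw [← Finset.sum_mul, sum_c_fixed]
      simp only [this, ← Finset.mul_sum, hSdef]
    have hS : (μ - 2*(n:ℝ)) * S = 0 := by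
      have h1 : ∑ α : Idx n, μ * v α = μ * S := by rw [hSdef, Finset.mul_sum]
      have h2 : ∑ α : Idx n, (2 * v α + r α.1.1 + r α.1.2)
          = 2 * S + ((n:ℝ) - 1) * (2 * S) := by
        have e0 : ∀ α : Idx n, 2 * v α + r α.1.1 + r α.1.2
            = 2 * v α + (r α.1.1 + r α.1.2) := by intro α; ring
        calc ∑ α : Idx n, (2 * v α + r α.1.1 + r α.1.2)
            = ∑ α : Idx n, (2 * v α) + ∑ α : Idx n, (r α.1.1 + r α.1.2) := by
              simp only [e0]; exact Finset.sum_add_distrib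
          _ = 2 * S + ((n:ℝ) - 1) * ∑ k : Fin n, r k := by
              rw [sum_idx_pair, ← Finset.mul_sum, hSdef]
          _ = 2 * S + ((n:ℝ) - 1) * (2 * S) := by rw [hsumr]
      have h3 : μ * S = 2 * S + ((n:ℝ) - 1) * (2 * S) := by
        rw [← h1, ← h2]
        exact Finset.sum_congr rfl fun α _ => eig α
      nlinarith [h3]
    have hrEq : ∀ i : Fin n, (μ - (n:ℝ)) * r i = 2 * S := by
      intro i
      have h1 : ∑ β : Idx n, c i β * (μ * v β) = μ * r i := by
        rw [hrdef]
        simp only [Finset.mul_sum]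
        exact Finset.sum_congr rfl fun β _ => by ring
      have h2 : ∑ β : Idx n, c i β * (2 * v β + r β.1.1 + r β.1.2)
          = 2 * r i + (((n:ℝ) - 2) * r i + ∑ k : Fin n, r k) := by
        have : ∀ β : Idx n, c i β * (2 * v β + r β.1.1 + r β.1.2)
            = 2 * (c i β * v β) + c i β * (r β.1.1 + r β.1.2) := by intro β; ring
        simp only [this, Finset.sum_add_distrib, ← Finset.mul_sum, sum_c_weighted]
        try rw [hrdef]
        try rfl
      have h3 : μ * r i = 2 * r i + (((n:ℝ) - 2) * r i + 2 * S) := by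
        rw [← hsumr, ← h2, ← h1]
        exact Finset.sum_congr rfl fun β _ => by rw [eig β]
      nlinarith [h3]
    by_cases h2n : μ = 2*(n:ℝ)
    · right; right; exact h2n
    · have hS0 : S = 0 := by
        rcases mul_eq_zero.mp hS with h | h
        · exact absurd (by linarith) h2n
        · exact h
      by_cases hnn : μ = (n:ℝ)
      · right; left; exact hnn
      · have hr0 : ∀ i : Fin n, r i = 0 := by
          intro i
          have h := hrEq i
          rw [hS0, mul_zero] at h
          rcases mul_eq_zero.mp h with h' | h'
          · exact absurd (by linarith) hnn
          · exact h'
        left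
        obtain ⟨α, hα⟩ := Function.ne_iff.mp hv0
        have h := eig α
        rw [hr0, hr0, add_zero, add_zero] at h
        have hα' : v α ≠ 0 := hα
        exact mul_right_cancel₀ hα' h
  · intro hμ
    have h01 : (⟨0, by omega⟩ : Fin n) < ⟨1, by omega⟩ := by simp [Fin.lt_def]
    have h23 : (⟨2, by omega⟩ : Fin n) < ⟨3, by omega⟩ := by simp [Fin.lt_def]
    have h02 : (⟨0, by omega⟩ : Fin n) < ⟨2, by omega⟩ := by simp [Fin.lt_def]
    have h13 : (⟨1, by omega⟩ : Fin n) < ⟨3, by omega⟩ := by simp [Fin.lt_def]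
    apply mem_spectrum_H_iff.mpr
    rcases hμ with h | h | h
    · -- μ = 2 : eigenvector supported on a 4-cycle
      set p01 : Idx n := ⟨(⟨0, by omega⟩, ⟨1, by omega⟩), h01⟩ with hp01
      set p23 : Idx n := ⟨(⟨2, by omega⟩, ⟨3, by omega⟩), h23⟩ with hp23
      set p02 : Idx n := ⟨(⟨0, by omega⟩, ⟨2, by omega⟩), h02⟩ with hp02
      set p13 : Idx n := ⟨(⟨1, by omega⟩, ⟨3, by omega⟩), h13⟩ with hp13
      set v : Idx n → ℝ := fun β => (if β = p01 then (1:ℝ) else 0) + (if β = p23 then 1 else 0)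
        - (if β = p02 then 1 else 0) - (if β = p13 then 1 else 0) with hvdef
      have hdist : p01 ≠ p23 ∧ p01 ≠ p02 ∧ p01 ≠ p13 := by
        refine ⟨?_, ?_, ?_⟩ <;>
          simp [hp01, hp23, hp02, hp13, Subtype.ext_iff, Prod.ext_iff, Fin.ext_iff]
      refine ⟨v, ?_, ?_⟩
      · intro hv0
        have := congrFun hv0 p01
        simp [hvdef, hdist.1, hdist.2.1, hdist.2.2] at this
      · funext α
        rw [H_mulVec]
        have hrz : ∀ i : Fin n, ∑ β : Idx n, c i β * v β = 0 := by
          intro i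
          simp only [hvdef, mul_add, mul_sub, mul_ite, mul_one, mul_zero,
            Finset.sum_add_distrib, Finset.sum_sub_distrib, Finset.sum_ite_eq',
            Finset.mem_univ, if_true]
          simp only [hp01, hp23, hp02, hp13, c]
          ring
        rw [hrz, hrz, h]
        simp only [Pi.smul_apply, smul_eq_mul]
        ring
    · -- μ = n : eigenvector v_{ij} = a_i + a_j with a summing to zero
      have h01' : (⟨0, by omega⟩ : Fin n) ≠ ⟨1, by omega⟩ := by simp [Fin.ext_iff]
      set a : Fin n → ℝ := fun k => (if k = ⟨0, by omega⟩ then (1:ℝ) else 0)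
        - (if k = ⟨1, by omega⟩ then 1 else 0) with hadef
      have hsa : ∑ k : Fin n, a k = 0 := by
        simp only [hadef, Finset.sum_sub_distrib, Finset.sum_ite_eq', Finset.mem_univ, if_true]
        ring
      set v : Idx n → ℝ := fun β => a β.1.1 + a β.1.2 with hvdef
      refine ⟨v, ?_, ?_⟩
      · intro hv0
        have := congrFun hv0 ⟨(⟨0, by omega⟩, ⟨2, by omega⟩), h02⟩
        simp only [hvdef, hadef, Pi.zero_apply] at this
        norm_num [Fin.ext_iff] at this
      · funext α
        rw [H_mulVec]
        have hrz : ∀ i : Fin n, ∑ β : Idx n, c i β * v β = ((n:ℝ) - 2) * a i := by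
          intro i
          simp only [hvdef]
          rw [sum_c_weighted, hsa, add_zero]
        rw [hrz, hrz, h]
        simp only [Pi.smul_apply, smul_eq_mul, hvdef]
        ring
    · -- μ = 2n : all-ones eigenvector
      refine ⟨fun _ => 1, ?_, ?_⟩
      · intro hv0
        have := congrFun hv0 ⟨(⟨0, by omega⟩, ⟨1, by omega⟩), h01⟩
        norm_num at this
      · funext α
        rw [H_mulVec]
        have hrz : ∀ i : Fin n, ∑ β : Idx n, c i β * (1:ℝ) = (n:ℝ) - 1 := by
          intro i
          simp only [mul_one, sum_c]
        rw [hrz, hrz, h]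
        simp only [Pi.smul_apply, smul_eq_mul]
        ring
end

section
/- Biorthogonality of the dual basis: for any α = (i,j) ∈ 𝕀 and β = (k,l) ∈ 𝕀, the trace inner product satisfies ⟨w_α, v_β⟩ = 1 if α = β and ⟨w_α, v_β⟩ = 0 otherwise. -/
open Matrix

/-- The centering matrix `J = I - (1/n) 𝟙𝟙ᵀ`. -/
noncomputable def Jmat (n : ℕ) : Matrix (Fin n) (Fin n) ℝ :=
  1 - (n : ℝ)⁻¹ • Matrix.of (fun _ _ => (1 : ℝ))

/-- The `i`-th column of the centering matrix, i.e. `J eᵢ`. -/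
noncomputable def Jcol (n : ℕ) (i : Fin n) : Fin n → ℝ := fun x => Jmat n x i

/-- The dual basis matrix `v_{i,j} = -(1/2)(a bᵀ + b aᵀ)` with `a = J eᵢ`, `b = J eⱼ`. -/
noncomputable def v {n : ℕ} (α : Idx n) : Matrix (Fin n) (Fin n) ℝ :=
  (-(1 / 2) : ℝ) • (vecMulVec (Jcol n α.1.1) (Jcol n α.1.2)
    + vecMulVec (Jcol n α.1.2) (Jcol n α.1.1))

/-! With `d = eᵢ - eⱼ` we have `w_{ij} = d dᵀ`, so `⟨w_{ij}, M⟩ = dᵀ M d`, and for the symmetrised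
outer product in `v_{kl}` this quadratic form is `-(d ⬝ J eₖ)(d ⬝ J eₗ)`. Since `d ⊥ 𝟙`, `J` fixes
`d`, which leaves `-(δᵢₖ - δⱼₖ)(δᵢₗ - δⱼₗ)`; with `i < j` and `k < l` this is `1` exactly when
`(i, j) = (k, l)` and `0` otherwise. -/

theorem Matrix.trace_vecMulVec_self_mul_vecMulVec_add_swap {ι R : Type*} [Fintype ι]
    [CommSemiring R] (x a b : ι → R) :
    (vecMulVec x x * (vecMulVec a b + vecMulVec b a)).trace = 2 * ((x ⬝ᵥ a) * (x ⬝ᵥ b)) := by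
  rw [vecMulVec_mul, trace_vecMulVec, vecMul_add, vecMul_vecMulVec, vecMul_vecMulVec,
    dotProduct_add, dotProduct_smul, dotProduct_smul, smul_eq_mul, smul_eq_mul]
  ring

lemma dotProduct_Jcol {n : ℕ} {x : Fin n → ℝ} (hx : ∑ y, x y = 0) (k : Fin n) :
    x ⬝ᵥ Jcol n k = x k := by
  have hJ : Jcol n k = Pi.single k 1 - fun _ => (n : ℝ)⁻¹ := by
    ext y
    simp [Jcol, Jmat, one_apply, Pi.single_apply]
  rw [hJ, dotProduct_sub, dotProduct_single, mul_one]
  simp [dotProduct, ← Finset.sum_mul, hx]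

noncomputable def edgeVec {n : ℕ} (α : Idx n) : Fin n → ℝ :=
  Pi.single α.1.1 1 - Pi.single α.1.2 1

lemma w_eq_vecMulVec_edgeVec {n : ℕ} (α : Idx n) : w α = vecMulVec (edgeVec α) (edgeVec α) := by
  ext x y
  simp only [w, edgeVec, vecMulVec_apply, Matrix.add_apply, Matrix.sub_apply, single_apply,
    Pi.sub_apply, Pi.single_apply]
  grind

lemma sum_edgeVec {n : ℕ} (α : Idx n) : ∑ y, edgeVec α y = 0 := by
  simp [edgeVec]

lemma neg_edgeVec_mul_edgeVec {n : ℕ} (α β : Idx n) :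
    -(edgeVec α β.1.1 * edgeVec α β.1.2) = if α = β then 1 else 0 := by
  obtain ⟨⟨i, j⟩, hij⟩ := α
  obtain ⟨⟨k, l⟩, hkl⟩ := β
  simp only [edgeVec, Pi.sub_apply, Pi.single_apply, Subtype.mk.injEq, Prod.mk.injEq]
  grind

theorem stmt5_general {n : ℕ} (α β : Idx n) :
    ((w α)ᵀ * v β).trace = if α = β then 1 else 0 := by
  rw [w_eq_vecMulVec_edgeVec, transpose_vecMulVec, v, Matrix.mul_smul, trace_smul,
    trace_vecMulVec_self_mul_vecMulVec_add_swap, dotProduct_Jcol (sum_edgeVec α),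
    dotProduct_Jcol (sum_edgeVec α), ← neg_edgeVec_mul_edgeVec, smul_eq_mul]
  ring

/-- Biorthogonality: `⟨w_α, v_β⟩ = δ_α^β`. -/
theorem stmt5 {n : ℕ} (hn : 2 ≤ n) (α β : Idx n) :
    ((w α)ᵀ * v β).trace = if α = β then 1 else 0 :=
  stmt5_general α β
end

section
/- For every α ∈ 𝕀, the dyadic matrix v_α coincides with the dual basis vector defined through H⁻¹; that is, v_α = Σ_{β ∈ 𝕀} [H⁻¹]_{α,β} · w_β. -/
open Matrix

/-!
Each `w_{k,l}` is the Laplacian of a single edge, so every symmetric matrix `A` with zero row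
sums expands as `A = -∑_{k<l} A_{k,l} w_{k,l}`; the matrices `v_α` are of this kind because the
columns of `J` sum to zero. For `A = x yᵀ` the pairing `⟨A, w_{k,l}⟩` is `(x_k - x_l)(y_k - y_l)`,
and `J eᵢ` has the same increments as `eᵢ`; this gives `⟨v_α, w_β⟩ = δ_{α,β}`. Hence `C_{α,β} = -v_α(β)` is a left inverse of `H`, and the expansion of
`v_α` is exactly the claim.
-/

section Laplacian

variable {n : ℕ}

lemma sum_idx_eq_sum_sum_ite {M : Type*} [AddCommMonoid M] (F : Fin n → Fin n → M) :
    ∑ β : Idx n, F β.1.1 β.1.2 = ∑ k, ∑ l, if k < l then F k l else 0 := by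
  rw [← Fintype.sum_prod_type', ← Finset.sum_filter]
  exact (Finset.sum_subtype (p := fun p : Fin n × Fin n => p.1 < p.2) {p | p.1 < p.2} (by simp)
    fun p => F p.1 p.2).symm

lemma sum_sum_eq_two_nsmul_sum_idx {M : Type*} [AddCommMonoid M] (F : Fin n → Fin n → M)
    (hF : ∀ k l, F k l = F l k) (hdiag : ∀ k, F k k = 0) :
    ∑ k, ∑ l, F k l = 2 • ∑ β : Idx n, F β.1.1 β.1.2 := by
  have hsplit : ∀ k l, F k l = (if k < l then F k l else 0) + (if l < k then F l k else 0) := by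
    intro k l
    rcases lt_trichotomy k l with h | rfl | h
    · simp [h, h.not_gt]
    · simp [hdiag]
    · simp [h, h.not_gt, hF k l]
  calc ∑ k, ∑ l, F k l
      = ∑ k, ∑ l, (if k < l then F k l else 0) + ∑ k, ∑ l, (if l < k then F l k else 0) := by
        simp only [← Finset.sum_add_distrib, ← hsplit]
    _ = 2 • ∑ β : Idx n, F β.1.1 β.1.2 := by
        rw [Finset.sum_comm (f := fun k l => if l < k then F l k else 0), sum_idx_eq_sum_sum_ite,
          two_nsmul]

lemma sum_sum_smul_single_laplacian (A : Matrix (Fin n) (Fin n) ℝ) :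
    ∑ k, ∑ l, A k l • (single k k 1 + single l l 1 - single k l 1 - single l k 1)
      = diagonal (fun k => ∑ l, A k l) + diagonal (fun l => ∑ k, A k l) - A - Aᵀ := by
  ext i j
  by_cases hij : i = j
  · subst hij
    simp [Matrix.sum_apply, single_apply, mul_add, mul_sub, Finset.sum_add_distrib,
      Finset.sum_sub_distrib, ite_and]
  · simp [Matrix.sum_apply, single_apply, mul_add, mul_sub, Finset.sum_add_distrib,
      Finset.sum_sub_distrib, ite_and, hij]

lemma sum_neg_smul_w_eq_self {A : Matrix (Fin n) (Fin n) ℝ} (hA : A.IsSymm)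
    (hrow : ∀ i, ∑ j, A i j = 0) :
    ∑ β : Idx n, (-A β.1.1 β.1.2) • w β = A := by
  have hcol : ∀ j, ∑ i, A i j = 0 := fun j => by simpa [hA.apply] using hrow j
  have key := sum_sum_eq_two_nsmul_sum_idx
    (fun k l => A k l • (single k k (1 : ℝ) + single l l 1 - single k l 1 - single l k 1))
    (fun k l => by rw [hA.apply l k]; abel_nf) (fun k => by simp)
  rw [sum_sum_smul_single_laplacian, hA.eq, two_nsmul] at key
  simp only [hrow, hcol, diagonal_zero, zero_add, zero_sub] at key
  simp only [neg_smul, Finset.sum_neg_distrib, w]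
  refine smul_right_injective _ (two_ne_zero (α := ℝ)) ?_
  simp only [two_smul, ← neg_add, ← key]
  abel

lemma trace_transpose_mul_w (A : Matrix (Fin n) (Fin n) ℝ) (β : Idx n) :
    (Aᵀ * w β).trace = A β.1.1 β.1.1 + A β.1.2 β.1.2 - A β.1.1 β.1.2 - A β.1.2 β.1.1 := by
  have h (i j : Fin n) : (Aᵀ * single i j (1 : ℝ)).trace = A i j := by
    simp [trace, mul_apply, single_apply, ite_and]
  simp only [w, Matrix.mul_add, Matrix.mul_sub, trace_add, trace_sub, h]

end Laplacian

section Centering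

variable {n : ℕ}

lemma sum_Jcol (i : Fin n) : ∑ x, Jcol n i x = 0 := by
  have hn : (n : ℝ) ≠ 0 := Nat.cast_ne_zero.mpr i.pos.ne'
  simp [Jcol, Jmat, one_apply, Finset.sum_sub_distrib, hn]

lemma Jcol_sub_Jcol (i k l : Fin n) :
    Jcol n i k - Jcol n i l = (if k = i then 1 else 0) - (if l = i then 1 else 0) := by
  simp [Jcol, Jmat, one_apply]

lemma v_isSymm (α : Idx n) : (v α).IsSymm := by
  simp [v, IsSymm, transpose_add, add_comm]

lemma sum_v_eq_zero (α : Idx n) (x : Fin n) : ∑ y, v α x y = 0 := by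
  simp [v, vecMulVec_apply, Finset.sum_add_distrib, ← Finset.mul_sum, sum_Jcol]

lemma trace_transpose_v_mul_w (α β : Idx n) :
    ((v α)ᵀ * w β).trace = if α = β then 1 else 0 := by
  obtain ⟨⟨i, j⟩, hij⟩ := α
  obtain ⟨⟨k, l⟩, hkl⟩ := β
  have hform : ((v ⟨(i, j), hij⟩)ᵀ * w ⟨(k, l), hkl⟩).trace
      = -((Jcol n i k - Jcol n i l) * (Jcol n j k - Jcol n j l)) := by
    rw [trace_transpose_mul_w]
    simp only [v, Matrix.smul_apply, Matrix.add_apply, vecMulVec_apply, smul_eq_mul]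
    ring
  simp only [hform, Jcol_sub_Jcol, Subtype.mk.injEq, Prod.mk.injEq] at hij hkl ⊢
  by_cases h : i = k ∧ j = l
  · obtain ⟨rfl, rfl⟩ := h
    simp [hij.ne, hij.ne']
  rw [if_neg h, neg_eq_zero]
  rcases eq_or_ne k i with rfl | hki
  · have hlj : l ≠ j := fun hlj => h ⟨rfl, hlj.symm⟩
    simp [hij.ne, hlj]
  rcases eq_or_ne l i with rfl | hli
  · simp [(hkl.trans hij).ne, hij.ne]
  · simp [hki, hli]

end Centering

lemma inv_H {n : ℕ} : (H n)⁻¹ = of fun α β : Idx n => -v α β.1.1 β.1.2 := by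
  refine inv_eq_left_inv (ext fun α β => ?_)
  calc ((of fun α β : Idx n => -v α β.1.1 β.1.2) * H n) α β
      = ((∑ γ : Idx n, (-v α γ.1.1 γ.1.2) • w γ)ᵀ * w β).trace := by
        simp [mul_apply, H, transpose_sum, Finset.sum_mul, trace_sum]
    _ = ((v α)ᵀ * w β).trace := by rw [sum_neg_smul_w_eq_self (v_isSymm α) (sum_v_eq_zero α)]
    _ = (1 : Matrix (Idx n) (Idx n) ℝ) α β := by rw [trace_transpose_v_mul_w, one_apply]

theorem stmt6_general {n : ℕ} (α : Idx n) :
    v α = ∑ β : Idx n, ((H n)⁻¹ α β) • w β := by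
  simp only [inv_H, of_apply]
  exact (sum_neg_smul_w_eq_self (v_isSymm α) (sum_v_eq_zero α)).symm

/-- The dyadic form of the dual basis agrees with the definition via `H⁻¹`:
`v_α = Σ_β [H⁻¹]_{α,β} w_β`. -/
theorem stmt6 {n : ℕ} (hn : 2 ≤ n) (α : Idx n) :
    v α = ∑ β : Idx n, ((H n)⁻¹ α β) • w β :=
  stmt6_general α
end
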